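/- Let n ≥ 2 and let (σ_H, g) be a normalized pair. Then for all a ∈ H(n) and b, b′ ∈ G(n−1): (i) g(z(a), w(b)) = ∏_{i=1}^{n−1} ∏_{j=1}^{n−1} g(v_{in}, u_j)^{a_{in} b_j}; (ii) g(v_{jn}, u_i) = g(u_n, v_{ij}) · g(v_{in}, u_j) for all 1 ≤ i < j ≤ n−1; (iii) g(w(a), z(b)) = ∏_{1≤i<j≤n−1} g(u_n, v_{ij})^{a_n b_{ij}} = ∏_{1≤i<j≤n−1} (g(v_{in}, u_j)⁻¹ g(v_{jn}, u_i))^{a_n b_{ij}}; (iv) g(a, bb′) = (∏_{i=1}^{n−1} ∏_{j=1}^{n−1} g(v_{in}, u_j)^{b′_i b_j a_n}) · g(a,b) · g(a,b′). -/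

import Mathlib

open scoped BigOperators

namespace FreeNilp

/-- Index set for pairs `(j,k)` with `j < k`. -/
abbrev PairIdx (n : ℕ) : Type := {p : Fin n × Fin n // p.1 < p.2}

/-- The free nilpotent group of class 2 and rank `n`, realized on
`ℤ^n × ℤ^{n(n-1)/2}`. -/
@[ext] structure G (n : ℕ) where
  u : Fin n → ℤ
  v : PairIdx n → ℤ

namespace G

instance (n : ℕ) : Group (G n) where
  mul r s := ⟨fun i => r.u i + s.u i, fun p => r.v p + s.v p + r.u p.1.1 * s.u p.1.2⟩
  one := ⟨fun _ => 0, fun _ => 0⟩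
  inv r := ⟨fun i => -r.u i, fun p => -r.v p + r.u p.1.1 * r.u p.1.2⟩
  mul_assoc r s t := by
    refine G.ext ?_ ?_ <;> funext x
    · show (r.u x + s.u x) + t.u x = r.u x + (s.u x + t.u x)
      ring
    · show (r.v x + s.v x + r.u x.1.1 * s.u x.1.2) + t.v x +
          (r.u x.1.1 + s.u x.1.1) * t.u x.1.2 =
        r.v x + (s.v x + t.v x + s.u x.1.1 * t.u x.1.2) +
          r.u x.1.1 * (s.u x.1.2 + t.u x.1.2)
      ring
  one_mul r := by
    refine G.ext ?_ ?_ <;> funext x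
    · show 0 + r.u x = r.u x
      ring
    · show 0 + r.v x + 0 * r.u x.1.2 = r.v x
      ring
  mul_one r := by
    refine G.ext ?_ ?_ <;> funext x
    · show r.u x + 0 = r.u x
      ring
    · show r.v x + 0 + r.u x.1.1 * 0 = r.v x
      ring
  inv_mul_cancel r := by
    refine G.ext ?_ ?_ <;> funext x
    · show -r.u x + r.u x = 0
      ring
    · show (-r.v x + r.u x.1.1 * r.u x.1.2) + r.v x + -r.u x.1.1 * r.u x.1.2 = 0
      ring

@[simp] lemma mul_u {n : ℕ} (r s : G n) (i : Fin n) : (r * s).u i = r.u i + s.u i := rfl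
@[simp] lemma mul_v {n : ℕ} (r s : G n) (p : PairIdx n) :
    (r * s).v p = r.v p + s.v p + r.u p.1.1 * s.u p.1.2 := rfl
@[simp] lemma one_u {n : ℕ} (i : Fin n) : (1 : G n).u i = 0 := rfl
@[simp] lemma one_v {n : ℕ} (p : PairIdx n) : (1 : G n).v p = 0 := rfl
@[simp] lemma inv_u {n : ℕ} (r : G n) (i : Fin n) : (r⁻¹).u i = -r.u i := rfl
@[simp] lemma inv_v {n : ℕ} (r : G n) (p : PairIdx n) :
    (r⁻¹).v p = -r.v p + r.u p.1.1 * r.u p.1.2 := rfl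

end G

/-- First-block coordinate `r_i`. -/
def uc {n : ℕ} (r : G n) (i : Fin n) : ℤ := r.u i

/-- Second-block coordinate `r_{jk}` (zero unless `j < k`). -/
def vc {n : ℕ} (r : G n) (j k : Fin n) : ℤ := if h : j < k then r.v ⟨(j, k), h⟩ else 0

/-- A multiplier (2-cocycle with values in the circle group) of a group. -/
def IsMultiplier {Γ : Type*} [Group Γ] (σ : Γ → Γ → Circle) : Prop :=
  (∀ r s t : Γ, σ r s * σ (r * s) t = σ r (s * t) * σ s t) ∧
  ∀ r : Γ, σ r 1 = 1 ∧ σ 1 r = 1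

/-- Similarity (cohomology) of multipliers. -/
def Similar {Γ : Type*} [Group Γ] (σ τ : Γ → Γ → Circle) : Prop :=
  ∃ β : Γ → Circle, ∀ r s : Γ, τ r s = β r * β s * (β (r * s))⁻¹ * σ r s

/-- The subgroup `H(n) ≅ ℤⁿ` of `G n`: only the coordinates `r_n` and `r_{jn}` may
be nonzero. -/
def Hsub (n : ℕ) : Subgroup (G n) where
  carrier := {r | (∀ i : Fin n, (i : ℕ) + 1 < n → r.u i = 0) ∧
                  ∀ p : PairIdx n, (p.1.2 : ℕ) + 1 < n → r.v p = 0}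
  one_mem' := ⟨fun _ _ => rfl, fun _ _ => rfl⟩
  mul_mem' := by
    rintro r s ⟨hr1, hr2⟩ ⟨hs1, hs2⟩
    refine ⟨fun i hi => ?_, fun p hp => ?_⟩
    · simp [hr1 i hi, hs1 i hi]
    · simp [hr2 p hp, hs2 p hp, hs1 p.1.2 hp]
  inv_mem' := by
    rintro r ⟨hr1, hr2⟩
    refine ⟨fun i hi => ?_, fun p hp => ?_⟩
    · simp [hr1 i hi]
    · simp [hr2 p hp, hr1 p.1.2 hp]

/-- The subgroup `G(n-1)` of `G n`: the coordinates `r_n` and `r_{jn}` vanish. -/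
def Gsub (n : ℕ) : Subgroup (G n) where
  carrier := {r | (∀ i : Fin n, (i : ℕ) + 1 = n → r.u i = 0) ∧
                  ∀ p : PairIdx n, (p.1.2 : ℕ) + 1 = n → r.v p = 0}
  one_mem' := ⟨fun _ _ => rfl, fun _ _ => rfl⟩
  mul_mem' := by
    rintro r s ⟨hr1, hr2⟩ ⟨hs1, hs2⟩
    refine ⟨fun i hi => ?_, fun p hp => ?_⟩
    · simp [hr1 i hi, hs1 i hi]
    · simp [hr2 p hp, hs2 p hp, hs1 p.1.2 hp]
  inv_mem' := by
    rintro r ⟨hr1, hr2⟩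
    refine ⟨fun i hi => ?_, fun p hp => ?_⟩
    · simp [hr1 i hi]
    · simp [hr2 p hp, hr1 p.1.2 hp]

lemma mem_Hsub_iff {n : ℕ} {r : G n} :
    r ∈ Hsub n ↔ (∀ i : Fin n, (i : ℕ) + 1 < n → r.u i = 0) ∧
      ∀ p : PairIdx n, (p.1.2 : ℕ) + 1 < n → r.v p = 0 := Iff.rfl

lemma mem_Gsub_iff {n : ℕ} {r : G n} :
    r ∈ Gsub n ↔ (∀ i : Fin n, (i : ℕ) + 1 = n → r.u i = 0) ∧
      ∀ p : PairIdx n, (p.1.2 : ℕ) + 1 = n → r.v p = 0 := Iff.rfl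

/-- `H(n)` is a normal subgroup; conjugation preserves it. -/
lemma conj_mem_Hsub {n : ℕ} (s : G n) {a : G n} (ha : a ∈ Hsub n) :
    s * a * s⁻¹ ∈ Hsub n := by
  obtain ⟨ha1, ha2⟩ := ha
  refine ⟨fun i hi => ?_, fun p hp => ?_⟩
  · simp [ha1 i hi]
  · have hj : (p.1.1 : ℕ) + 1 < n := by
      have h2 : (p.1.1 : ℕ) < (p.1.2 : ℕ) := p.2
      omega
    simp [ha2 p hp, ha1 p.1.2 hp, ha1 p.1.1 hj]

/-- The action `α_b(a) = b a b⁻¹` of `G(n-1)` on `H(n)`. -/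
def conjH {n : ℕ} (b : Gsub n) (a : Hsub n) : Hsub n :=
  ⟨(b : G n) * (a : G n) * (b : G n)⁻¹, conj_mem_Hsub _ a.2⟩

/-- The `H(n)`-part of the unique factorization `r = a·b`, `a ∈ H(n)`, `b ∈ G(n-1)`. -/
def hpart {n : ℕ} (r : G n) : Hsub n :=
  ⟨⟨fun i => if (i : ℕ) + 1 = n then r.u i else 0,
    fun p => if (p.1.2 : ℕ) + 1 = n then r.v p else 0⟩, by
    refine ⟨fun i hi => ?_, fun p hp => ?_⟩
    · exact if_neg (by omega)
    · exact if_neg (by omega)⟩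

/-- The `G(n-1)`-part of the unique factorization `r = a·b`. -/
def gpart {n : ℕ} (r : G n) : Gsub n :=
  ⟨⟨fun i => if (i : ℕ) + 1 = n then 0 else r.u i,
    fun p => if (p.1.2 : ℕ) + 1 = n then 0 else r.v p⟩, by
    refine ⟨fun i hi => ?_, fun p hp => ?_⟩
    · exact if_pos hi
    · exact if_pos hp⟩

/-- `r` indeed factors as `hpart r * gpart r`. -/
lemma hpart_mul_gpart {n : ℕ} (r : G n) : ((hpart r : G n)) * (gpart r : G n) = r := by
  refine G.ext ?_ ?_ <;> funext x
  · show (if ((x : ℕ)) + 1 = n then r.u x else 0) + (if (x : ℕ) + 1 = n then 0 else r.u x) = r.u x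
    split <;> ring
  · show (if ((x.1.2 : ℕ)) + 1 = n then r.v x else 0) +
      (if (x.1.2 : ℕ) + 1 = n then 0 else r.v x) +
      (if ((x.1.1 : ℕ)) + 1 = n then r.u x.1.1 else 0) *
        (if (x.1.2 : ℕ) + 1 = n then 0 else r.u x.1.2) = r.v x
    have h2 : (x.1.1 : ℕ) < (x.1.2 : ℕ) := x.2
    have h3 : (x.1.2 : ℕ) < n := x.1.2.isLt
    rcases eq_or_ne ((x.1.2 : ℕ) + 1) n with h | h
    · rw [if_pos h, if_pos h, if_pos h, if_neg (by omega)]; ring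
    · rw [if_neg h, if_neg h, if_neg h, if_neg (show ¬((x.1.1 : ℕ) + 1 = n) by omega)]
      ring

/-- An admissible pair `(σ_H, g)` (Mackey data with trivial multiplier on `G(n-1)`). -/
structure AdmissiblePair (n : ℕ) (σH : Hsub n → Hsub n → Circle)
    (g : Hsub n → Gsub n → Circle) : Prop where
  multH : IsMultiplier σH
  g_one_right : ∀ a : Hsub n, g a 1 = 1
  g_one_left : ∀ b : Gsub n, g 1 b = 1
  g_add : ∀ (a a' : Hsub n) (b : Gsub n),
    g (a * a') b = σH (conjH b a) (conjH b a') * (σH a a')⁻¹ * (g a b * g a' b)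
  g_mul : ∀ (a : Hsub n) (b b' : Gsub n), g a (b * b') = g (conjH b' a) b * g a b'

/-- An admissible triple `(σ_H, g, σ')`. -/
def AdmissibleTriple (n : ℕ) (σH : Hsub n → Hsub n → Circle)
    (g : Hsub n → Gsub n → Circle) (σ' : Gsub n → Gsub n → Circle) : Prop :=
  AdmissiblePair n σH g ∧ IsMultiplier σ'

/-- The map `σ_n(a′b, ab′) = σ_H(a′, α_b(a)) g(a,b) σ′(b,b′)` defined via the unique
factorizations. -/
noncomputable def sigmaN {n : ℕ} (σH : Hsub n → Hsub n → Circle) (g : Hsub n → Gsub n → Circle)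
    (σ' : Gsub n → Gsub n → Circle) (r s : G n) : Circle :=
  σH (hpart r) (conjH (gpart r) (hpart s)) * g (hpart s) (gpart r) *
    σ' (gpart r) (gpart s)

/-- The map `τ(a′b, ab′) = σ_H(a′, α_b(a)) g(a,b)` defined via the unique factorizations. -/
noncomputable def tauN {n : ℕ} (σH : Hsub n → Hsub n → Circle) (g : Hsub n → Gsub n → Circle)
    (r s : G n) : Circle :=
  σH (hpart r) (conjH (gpart r) (hpart s)) * g (hpart s) (gpart r)

/-- The generator `u_i`. -/
def uE {n : ℕ} (i : Fin n) : G n := ⟨fun j => if j = i then 1 else 0, fun _ => 0⟩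

/-- The generator `v_{jk}`. -/
def vE {n : ℕ} (j k : Fin n) : G n := ⟨fun _ => 0, fun p => if p.1 = (j, k) then 1 else 0⟩

/-- The last index `n` (i.e. `n-1` in `Fin n`). -/
def lastI (n : ℕ) (hn : 0 < n) : Fin n := ⟨n - 1, by omega⟩

/-- `u_n` as an element of `H(n)`. -/
def unH {n : ℕ} (hn : 0 < n) : Hsub n :=
  ⟨uE (lastI n hn), by
    refine ⟨fun i hi => ?_, fun p hp => rfl⟩
    have h : i ≠ lastI n hn := by
      intro h; apply absurd hi; rw [h]; show ¬ (n - 1) + 1 < n; omega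
    simp [uE, h]⟩

/-- `u_i` (for `i < n`) as an element of `G(n-1)`. -/
def uiG {n : ℕ} (i : Fin n) (hi : (i : ℕ) + 1 < n) : Gsub n :=
  ⟨uE i, by
    refine ⟨fun j hj => ?_, fun p hp => rfl⟩
    have h : j ≠ i := by intro h; rw [h] at hj; omega
    simp [uE, h]⟩

/-- `v_{in}` (for `i < n`) as an element of `H(n)`. -/
def vinH {n : ℕ} (i : Fin n) (hi : (i : ℕ) + 1 < n) : Hsub n :=
  ⟨vE i (lastI n (by omega)), by
    refine ⟨fun j hj => rfl, fun p hp => ?_⟩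
    have h : p.1 ≠ (i, lastI n (by omega)) := by
      intro h
      have h2 : (p.1.2 : ℕ) = n - 1 := by rw [h]; rfl
      omega
    simp [vE, h]⟩

/-- `v_{ij}` (for `j < n`) as an element of `G(n-1)`. -/
def vijG {n : ℕ} (i j : Fin n) (hj : (j : ℕ) + 1 < n) : Gsub n :=
  ⟨vE i j, by
    refine ⟨fun k hk => rfl, fun p hp => ?_⟩
    have h : p.1 ≠ (i, j) := by
      intro h
      have h2 : (p.1.2 : ℕ) = (j : ℕ) := by rw [h]
      omega
    simp [vE, h]⟩

/-- The "word part" `w(a)` of `a ∈ H(n)`. -/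
def wH {n : ℕ} (a : Hsub n) : Hsub n :=
  ⟨⟨(a : G n).u, fun _ => 0⟩,
    ⟨fun i hi => (mem_Hsub_iff.mp a.2).1 i hi, fun _ _ => rfl⟩⟩

/-- The "central part" `z(a)` of `a ∈ H(n)`. -/
def zH {n : ℕ} (a : Hsub n) : Hsub n :=
  ⟨⟨fun _ => 0, (a : G n).v⟩,
    ⟨fun _ _ => rfl, fun p hp => (mem_Hsub_iff.mp a.2).2 p hp⟩⟩

/-- The "word part" `w(b)` of `b ∈ G(n-1)`. -/
def wG {n : ℕ} (b : Gsub n) : Gsub n :=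
  ⟨⟨(b : G n).u, fun _ => 0⟩,
    ⟨fun i hi => (mem_Gsub_iff.mp b.2).1 i hi, fun _ _ => rfl⟩⟩

/-- The "central part" `z(b)` of `b ∈ G(n-1)`. -/
def zG {n : ℕ} (b : Gsub n) : Gsub n :=
  ⟨⟨fun _ => 0, (b : G n).v⟩,
    ⟨fun _ _ => rfl, fun p hp => (mem_Gsub_iff.mp b.2).2 p hp⟩⟩

/-- `g(v_{in}, u_j)`, as a total function (equal to `1` outside the admissible range). -/
noncomputable def gvu {n : ℕ} (g : Hsub n → Gsub n → Circle) (i j : Fin n) : Circle :=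
  if h : (i : ℕ) + 1 < n ∧ (j : ℕ) + 1 < n then g (vinH i h.1) (uiG j h.2) else 1

/-- `g(u_n, v_{ij})`, as a total function (equal to `1` outside the admissible range). -/
noncomputable def guv {n : ℕ} (g : Hsub n → Gsub n → Circle) (i j : Fin n) : Circle :=
  if h : (j : ℕ) + 1 < n then g (unH (by omega)) (vijG i j h) else 1

/-- A normalized pair `(σ_H, g)`: admissible, with `σ_H` of the standard `λ`-form, and
`g(u_n, u_i) = 1` for all `1 ≤ i ≤ n-1`. -/
def Normalized {n : ℕ} (hn : 0 < n) (σH : Hsub n → Hsub n → Circle)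
    (g : Hsub n → Gsub n → Circle) (lam : Fin n → Circle) : Prop :=
  AdmissiblePair n σH g ∧
  (∀ a' a : Hsub n, σH a' a =
    ∏ i ∈ Finset.univ.filter (fun i : Fin n => (i : ℕ) + 1 < n),
      lam i ^ (uc (a' : G n) (lastI n hn) * vc (a : G n) i (lastI n hn))) ∧
  ∀ (i : Fin n) (hi : (i : ℕ) + 1 < n), g (unH hn) (uiG i hi) = 1

/-- The multiplier `σ_λ` of `G n` attached to a family of parameters
`λ_{i,jk} ∈ 𝕋` (`1 ≤ i ≤ k`, `1 ≤ j < k ≤ n`). -/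
noncomputable def sigmaLam {n : ℕ} (lam : Fin n → Fin n → Fin n → Circle) (r s : G n) : Circle :=
  (∏ t ∈ Finset.univ.filter
      (fun t : Fin n × Fin n × Fin n => t.1 < t.2.1 ∧ t.2.1 < t.2.2),
    lam t.1 t.2.1 t.2.2 ^ (vc s t.2.1 t.2.2 * uc r t.1 + uc s t.2.2 * vc r t.1 t.2.1) *
    lam t.2.1 t.1 t.2.2 ^ (vc s t.1 t.2.2 * uc r t.2.1 +
      uc s t.2.2 * (uc r t.1 * uc r t.2.1 - vc r t.1 t.2.1))) *
  ∏ p ∈ Finset.univ.filter (fun p : Fin n × Fin n => p.1 < p.2),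
    lam p.1 p.1 p.2 ^ (vc s p.1 p.2 * uc r p.1 +
      uc s p.2 * (uc r p.1 * (uc r p.1 - 1) / 2)) *
    lam p.2 p.1 p.2 ^ (uc r p.2 * (vc s p.1 p.2 + uc r p.1 * uc s p.2) +
      uc r p.1 * (uc s p.2 * (uc s p.2 - 1) / 2))

/-- The extension of the parameter family to indices `i > k`, via
`λ_{k,ij} = λ_{i,jk}⁻¹ λ_{j,ik}` for `i < j < k`. -/
noncomputable def lamExt {n : ℕ} (lam : Fin n → Fin n → Fin n → Circle) (i j k : Fin n) : Circle :=
  if i ≤ k then lam i j k else (lam j k i)⁻¹ * lam k j i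

open scoped commutatorElement

/-! The `λ`-form of `σ_H` makes `g(·, b)` multiplicative on `H(n)` up to the factor
`∏ λ_i ^ (a_n b_i a'_n)`, which is trivial when `a'` is central or `b` has no `u`-part. For
central `c`, `g(c, ·)` is a character of `G(n-1)`, so it kills the commutators
`v_{ij} = [u_i, u_j]` and is determined by the values `g(v_{in}, u_j)`; this gives (i), and (iv)
via `α_{b'}(a) = a · z` with `z` central of coordinates `b'_i a_n`. Since `w(a) = u_n ^ a_n` and
`g(·, z(b))` is a character of `H(n)`, (iii) reduces to `g(u_n, v_{ij})`. Finally (ii) compares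
two expansions of `g(u_n, u_i u_j)`, one of them through `u_i u_j = u_j u_i v_{ij}`, using
`g(u_n, u_i) = 1`. -/

lemma eq_prod_zpow_single_of_map_add {ι M : Type*} [Fintype ι] [DecidableEq ι] [CommGroup M]
    (φ : (ι → ℤ) → M) (hφ : ∀ f f', φ (f + f') = φ f * φ f') (f : ι → ℤ) :
    φ f = ∏ i, φ (Pi.single i 1) ^ f i := by
  let ψ : (ι → ℤ) →+ Additive M := AddMonoidHom.mk' (fun f => Additive.ofMul (φ f)) hφ
  have hψ : ψ f = ∑ i, f i • ψ (Pi.single i 1) := by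
    conv_lhs => rw [← Finset.univ_sum_single f]
    simp only [map_sum, ← map_zsmul]
    congr! with i
    ext j; by_cases h : j = i <;> simp [h]
  exact congrArg Additive.toMul hψ

section Development

variable {n : ℕ}

lemma subgroup_ext {K : Subgroup (G n)} {x y : K} (hu : ∀ i, (x : G n).u i = (y : G n).u i)
    (hv : ∀ p, (x : G n).v p = (y : G n).v p) : x = y :=
  Subtype.ext (G.ext (funext hu) (funext hv))

lemma PairIdx.fst_succ_lt (p : PairIdx n) : (p.1.1 : ℕ) + 1 < n := by
  have := p.1.2.isLt; have : (p.1.1 : ℕ) < p.1.2 := p.2; omega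

@[simp] lemma coe_conjH_u (b : Gsub n) (a : Hsub n) (i : Fin n) :
    ((conjH b a : Hsub n) : G n).u i = (a : G n).u i := by
  simp [conjH]

@[simp] lemma coe_conjH_v (b : Gsub n) (a : Hsub n) (p : PairIdx n) :
    ((conjH b a : Hsub n) : G n).v p =
      (a : G n).v p + (b : G n).u p.1.1 * (a : G n).u p.1.2 := by
  have ha : (a : G n).u p.1.1 = 0 := a.2.1 _ p.fst_succ_lt
  simp [conjH, ha]
  ring

/- `zHOf f` has `f i` at `(i, n)`. Entries of `f` at indices outside the subgroup are dropped, so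
`Pi.single` at such an index gives `1`. -/

def zGOf (f : PairIdx n → ℤ) : Gsub n :=
  ⟨⟨0, fun p => if (p.1.2 : ℕ) + 1 < n then f p else 0⟩,
    fun _ _ => rfl, fun _ _ => if_neg (by omega)⟩

def wGOf (f : Fin n → ℤ) : Gsub n :=
  ⟨⟨fun i => if (i : ℕ) + 1 < n then f i else 0, 0⟩,
    fun _ _ => if_neg (by omega), fun _ _ => rfl⟩

def zHOf (f : Fin n → ℤ) : Hsub n :=
  ⟨⟨0, fun p => if (p.1.2 : ℕ) + 1 = n then f p.1.1 else 0⟩,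
    fun _ _ => rfl, fun _ _ => if_neg (by omega)⟩

lemma conjH_of_u_eq_zero {b : Gsub n} (hb : ∀ i, (b : G n).u i = 0) (a : Hsub n) :
    conjH b a = a :=
  subgroup_ext (by simp) (by simp [hb])

lemma conjH_of_central (b : Gsub n) {c : Hsub n} (hc : ∀ i, (c : G n).u i = 0) :
    conjH b c = c :=
  subgroup_ext (by simp) (by simp [hc])

lemma conjH_eq_mul_zHOf (hn : 0 < n) (b : Gsub n) (a : Hsub n) :
    conjH b a = a * zHOf (fun i => uc (b : G n) i * uc (a : G n) (lastI n hn)) := by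
  refine subgroup_ext (by simp [zHOf]) (fun p => ?_)
  by_cases hp : (p.1.2 : ℕ) + 1 = n
  · have : p.1.2 = lastI n hn := Fin.ext (by simp only [lastI]; omega)
    simp [zHOf, hp, uc, ← this]
  · simp [zHOf, hp, a.2.1 p.1.2 (by omega)]

lemma zHOf_add (f f' : Fin n → ℤ) : zHOf (f + f') = zHOf f * zHOf f' :=
  subgroup_ext (by simp [zHOf]) fun p => by
    simp only [zHOf, Pi.add_apply, Subgroup.coe_mul, G.mul_v, Pi.zero_apply, mul_zero, add_zero]
    split_ifs <;> ring

lemma zGOf_add (f f' : PairIdx n → ℤ) : zGOf (f + f') = zGOf f * zGOf f' :=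
  subgroup_ext (by simp [zGOf]) fun p => by
    simp only [zGOf, Pi.add_apply, Subgroup.coe_mul, G.mul_v, Pi.zero_apply, mul_zero, add_zero]
    split_ifs <;> ring

lemma wGOf_mul (f f' : Fin n → ℤ) :
    wGOf f * wGOf f' = wGOf (f + f') * zGOf (fun p => f p.1.1 * f' p.1.2) := by
  refine subgroup_ext (fun i => ?_) (fun p => ?_)
  · simp only [wGOf, zGOf, Subgroup.coe_mul, MulMemClass.mk_mul_mk, G.mul_u, Pi.add_apply,
      Pi.zero_apply, add_zero]
    split_ifs <;> ring
  · have := p.fst_succ_lt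
    simp only [wGOf, zGOf, Subgroup.coe_mul, MulMemClass.mk_mul_mk, G.mul_v, Pi.add_apply,
      Pi.zero_apply, add_zero, zero_add, mul_ite, ite_mul, zero_mul, mul_zero]
    split_ifs <;> ring

lemma eq_wGOf_mul_zGOf (b : Gsub n) :
    b = wGOf (fun i => (b : G n).u i) * zGOf (fun p => (b : G n).v p) := by
  refine subgroup_ext (fun i => ?_) (fun p => ?_)
  · simp only [wGOf, zGOf, MulMemClass.mk_mul_mk, G.mul_u, Pi.zero_apply, add_zero,
      left_eq_ite_iff, not_lt]
    exact fun h => b.2.1 i (by omega)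
  · simp only [wGOf, zGOf, MulMemClass.mk_mul_mk, G.mul_v, Pi.zero_apply, zero_add, mul_zero,
      add_zero, left_eq_ite_iff, not_lt]
    exact fun h => b.2.2 p (by omega)

lemma zG_eq_zGOf (b : Gsub n) : zG b = zGOf (fun p => (b : G n).v p) := by
  refine subgroup_ext (fun i => rfl) (fun p => ?_)
  simp only [zG, zGOf, left_eq_ite_iff, not_lt]
  exact fun h => b.2.2 p (by omega)

lemma central_eq_zHOf (hn : 0 < n) {c : Hsub n} (hc : ∀ i, (c : G n).u i = 0) :
    c = zHOf (fun i => vc (c : G n) i (lastI n hn)) := by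
  refine subgroup_ext hc (fun p => ?_)
  by_cases hp : (p.1.2 : ℕ) + 1 = n
  · have : p.1.2 = lastI n hn := Fin.ext (by simp only [lastI]; omega)
    simp [zHOf, hp, vc, ← this, p.2]
  · simp [zHOf, hp, c.2.2 p (by omega)]

lemma zGOf_single (p : PairIdx n) :
    zGOf (Pi.single p 1) = if hp : (p.1.2 : ℕ) + 1 < n then vijG p.1.1 p.1.2 hp else 1 := by
  split_ifs with hp
  · refine subgroup_ext (fun i => rfl) (fun q => ?_)
    by_cases hq : q = p
    · subst hq; simp [zGOf, vijG, vE, hp]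
    · simp [zGOf, vijG, vE, hq, (Subtype.coe_injective.ne hq : q.1 ≠ p.1)]
  · refine subgroup_ext (fun i => rfl) (fun q => ?_)
    by_cases hq : q = p
    · subst hq; simp [zGOf, hp]
    · simp [zGOf, hq]

lemma wGOf_single (i : Fin n) :
    wGOf (Pi.single i 1) = if hi : (i : ℕ) + 1 < n then uiG i hi else 1 := by
  split_ifs with hi
  · refine subgroup_ext (fun j => ?_) (fun q => rfl)
    by_cases hj : j = i
    · subst hj; simp [wGOf, uiG, uE, hi]
    · simp [wGOf, uiG, uE, hj]
  · refine subgroup_ext (fun j => ?_) (fun q => rfl)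
    by_cases hj : j = i
    · subst hj; simp [wGOf, hi]
    · simp [wGOf, hj]

lemma zHOf_single (i : Fin n) :
    zHOf (Pi.single i 1) = if hi : (i : ℕ) + 1 < n then vinH i hi else 1 := by
  split_ifs with hi
  · refine subgroup_ext (fun j => rfl) (fun q => ?_)
    simp only [zHOf, Pi.single_apply, Fin.ext_iff, vinH, vE, lastI, Prod.ext_iff]
    split_ifs <;> omega
  · refine subgroup_ext (fun j => rfl) (fun q => ?_)
    have := q.fst_succ_lt
    simp only [zHOf, Pi.single_apply, OneMemClass.coe_one, G.one_v, ite_eq_right_iff, one_ne_zero,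
      imp_false]
    rintro h rfl
    omega

lemma vijG_eq_commutator {i j : Fin n} (hij : i < j) (hi : (i : ℕ) + 1 < n)
    (hj : (j : ℕ) + 1 < n) : vijG i j hj = ⁅uiG i hi, uiG j hj⁆ := by
  have hij' : (i : ℕ) < j := hij
  refine subgroup_ext (fun k => ?_) (fun p => ?_)
  · simp [commutatorElement_def, vijG, vE, uiG, uE]
  · have : (p.1.1 : ℕ) < p.1.2 := p.2
    simp only [vijG, vE, uiG, uE, commutatorElement_def, Prod.ext_iff, Fin.ext_iff,
      MulMemClass.mk_mul_mk, Subgroup.coe_mul, InvMemClass.coe_inv, G.mul_v, G.inv_v, G.mul_u,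
      G.inv_u, neg_zero, add_zero, zero_add, mul_ite, mul_one, mul_zero, mul_neg,
      add_neg_cancel_comm, add_neg_cancel_right]
    split_ifs <;> omega

lemma uiG_mul_uiG {i j : Fin n} (hij : i < j) (hi : (i : ℕ) + 1 < n) (hj : (j : ℕ) + 1 < n) :
    uiG i hi * uiG j hj = uiG j hj * uiG i hi * vijG i j hj := by
  have hij' : (i : ℕ) < j := hij
  refine subgroup_ext (fun k => ?_) (fun p => ?_)
  · simp only [uiG, uE, MulMemClass.mk_mul_mk, G.mul_u, vijG, vE, add_zero]
    split_ifs <;> omega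
  · have : (p.1.1 : ℕ) < p.1.2 := p.2
    simp only [uiG, uE, vijG, vE, Fin.ext_iff, Prod.ext_iff, MulMemClass.mk_mul_mk, G.mul_v,
      G.mul_u, add_zero, zero_add, mul_ite, mul_one, mul_zero]
    split_ifs <;> omega

lemma conjH_uiG_unH (hn : 0 < n) (j : Fin n) (hj : (j : ℕ) + 1 < n) :
    conjH (uiG j hj) (unH hn) = unH hn * vinH j hj := by
  refine subgroup_ext (fun i => ?_) (fun p => ?_)
  · simp [unH, vinH, uE, vE]
  · have := p.fst_succ_lt
    simp only [uiG, uE, unH, vinH, vE, lastI, Fin.ext_iff, Prod.ext_iff, coe_conjH_v,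
      MulMemClass.mk_mul_mk, G.mul_v, mul_ite, mul_one, mul_zero, zero_add, add_zero]
    split_ifs <;> omega

lemma coe_unH_zpow (hn : 0 < n) (m : ℤ) :
    ((unH hn ^ m : Hsub n) : G n) = ⟨fun i => if i = lastI n hn then m else 0, 0⟩ := by
  induction m using Int.induction_on with
  | zero => ext <;> simp
  | succ k ih =>
    rw [zpow_add_one, Subgroup.coe_mul, ih]
    ext p
    · simp only [unH, uE, G.mul_u]
      split_ifs <;> ring
    · have := p.fst_succ_lt
      simp only [unH, uE, lastI, Fin.ext_iff, G.mul_v, Pi.zero_apply, add_zero, zero_add, mul_ite,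
        mul_one, mul_zero, ite_eq_right_iff, Int.natCast_eq_zero]
      omega
  | pred k ih =>
    rw [zpow_sub_one, Subgroup.coe_mul, Subgroup.coe_inv, ih]
    ext p
    · simp only [unH, uE, G.mul_u, G.inv_u]
      split_ifs <;> ring
    · have := p.fst_succ_lt
      simp only [unH, uE, lastI, Fin.ext_iff, G.mul_v, G.inv_v, G.inv_u, Pi.zero_apply, neg_zero,
        zero_add, mul_ite, mul_one, mul_zero, mul_neg]
      omega

lemma wH_eq_unH_zpow (hn : 0 < n) (a : Hsub n) : wH a = unH hn ^ uc (a : G n) (lastI n hn) := by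
  refine Subtype.ext ?_
  rw [coe_unH_zpow]
  refine G.ext (funext fun i => ?_) rfl
  by_cases hi : i = lastI n hn
  · simp [wH, hi, uc]
  · simp only [wH, hi, ↓reduceIte]
    exact a.2.1 i (by simp only [Fin.ext_iff, lastI] at hi; omega)

lemma vc_zHOf_last (hn : 0 < n) (f : Fin n → ℤ) {i : Fin n} (hi : (i : ℕ) + 1 < n) :
    vc ((zHOf f : Hsub n) : G n) i (lastI n hn) = f i := by
  have hlt : i < lastI n hn := Fin.lt_def.mpr (by simp only [lastI]; omega)
  rw [vc, dif_pos hlt]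
  exact if_pos (by simp only [lastI]; omega)

lemma vc_conjH_last (hn : 0 < n) (b : Gsub n) (a : Hsub n) {i : Fin n} (hi : (i : ℕ) + 1 < n) :
    vc ((conjH b a : Hsub n) : G n) i (lastI n hn) =
      vc (a : G n) i (lastI n hn) + uc (b : G n) i * uc (a : G n) (lastI n hn) := by
  have hlt : i < lastI n hn := Fin.lt_def.mpr (by simp only [lastI]; omega)
  simp [vc, hlt, uc]

lemma prod_filter_gvu (g : Hsub n → Gsub n → Circle) (E : Fin n → Fin n → ℤ) :
    ∏ i ∈ Finset.univ.filter (fun i : Fin n => (i : ℕ) + 1 < n),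
      ∏ j ∈ Finset.univ.filter (fun j : Fin n => (j : ℕ) + 1 < n), gvu g i j ^ E i j =
    ∏ i, ∏ j, gvu g i j ^ E i j := by
  have hgvu : ∀ i j : Fin n, ¬((i : ℕ) + 1 < n ∧ (j : ℕ) + 1 < n) → gvu g i j = 1 :=
    fun i j h => dif_neg h
  rw [Finset.prod_filter_of_ne fun i _ hi => ?_]
  · refine Finset.prod_congr rfl fun i _ => Finset.prod_filter_of_ne fun j _ hj => ?_
    by_contra h
    exact hj (by rw [hgvu i j (fun h' => h h'.2), one_zpow])
  · by_contra h
    refine hi (Finset.prod_eq_one fun j _ => ?_)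
    rw [hgvu i j (fun h' => h h'.1), one_zpow]

lemma prod_filter_guv (g : Hsub n → Gsub n → Circle) (E : Fin n → Fin n → ℤ) :
    ∏ p ∈ Finset.univ.filter (fun p : Fin n × Fin n => p.1 < p.2 ∧ (p.2 : ℕ) + 1 < n),
      guv g p.1 p.2 ^ E p.1 p.2 =
    ∏ p : PairIdx n, guv g p.1.1 p.1.2 ^ E p.1.1 p.1.2 := by
  rw [← Finset.filter_filter, Finset.prod_filter_of_ne fun p _ hp => ?_]
  · exact Finset.prod_subtype _ (fun p => by simp)
      (fun p : Fin n × Fin n => guv g p.1 p.2 ^ E p.1 p.2)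
  · by_contra h
    exact hp (by rw [guv, dif_neg h, one_zpow])

section Cocycle

variable {σH : Hsub n → Hsub n → Circle} {g : Hsub n → Gsub n → Circle}

def SigmaLamForm (hn : 0 < n) (σH : Hsub n → Hsub n → Circle) (lam : Fin n → Circle) :
    Prop :=
  ∀ a' a : Hsub n, σH a' a =
    ∏ i ∈ Finset.univ.filter (fun i : Fin n => (i : ℕ) + 1 < n),
      lam i ^ (uc (a' : G n) (lastI n hn) * vc (a : G n) i (lastI n hn))

lemma SigmaLamForm.apply_conjH {hn : 0 < n} {lam : Fin n → Circle} (hσ : SigmaLamForm hn σH lam)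
    (b : Gsub n) (a a' : Hsub n) :
    σH (conjH b a) (conjH b a') = σH a a' *
      ∏ i ∈ Finset.univ.filter (fun i : Fin n => (i : ℕ) + 1 < n),
        lam i ^ (uc (a : G n) (lastI n hn) * (uc (b : G n) i * uc (a' : G n) (lastI n hn))) := by
  rw [hσ, hσ, ← Finset.prod_mul_distrib]
  refine Finset.prod_congr rfl fun i hi => ?_
  rw [vc_conjH_last hn b a' (Finset.mem_filter.mp hi).2, ← zpow_add, ← mul_add]
  simp only [uc, coe_conjH_u]

variable {hn : 0 < n} {lam : Fin n → Circle}

lemma AdmissiblePair.g_mul_left_eq (hadm : AdmissiblePair n σH g) (hσ : SigmaLamForm hn σH lam)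
    (a a' : Hsub n) (b : Gsub n) :
    g (a * a') b =
      (∏ i ∈ Finset.univ.filter (fun i : Fin n => (i : ℕ) + 1 < n),
        lam i ^ (uc (a : G n) (lastI n hn) * (uc (b : G n) i * uc (a' : G n) (lastI n hn)))) *
      (g a b * g a' b) := by
  rw [hadm.g_add, hσ.apply_conjH, mul_comm (σH a a'), mul_inv_cancel_right]

lemma AdmissiblePair.g_mul_left_of_central (hadm : AdmissiblePair n σH g)
    (hσ : SigmaLamForm hn σH lam) (a : Hsub n) {c : Hsub n} (hc : ∀ i, (c : G n).u i = 0)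
    (b : Gsub n) : g (a * c) b = g a b * g c b := by
  simp [hadm.g_mul_left_eq hσ, uc, hc]

lemma AdmissiblePair.g_mul_left_of_u_eq_zero (hadm : AdmissiblePair n σH g)
    (hσ : SigmaLamForm hn σH lam) (a a' : Hsub n) {b : Gsub n} (hb : ∀ i, (b : G n).u i = 0) :
    g (a * a') b = g a b * g a' b := by
  simp [hadm.g_mul_left_eq hσ, uc, hb]

lemma AdmissiblePair.g_zpow_left_of_u_eq_zero (hadm : AdmissiblePair n σH g)
    (hσ : SigmaLamForm hn σH lam) (a : Hsub n) {b : Gsub n} (hb : ∀ i, (b : G n).u i = 0)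
    (m : ℤ) : g (a ^ m) b = g a b ^ m :=
  map_zpow (MonoidHom.mk' (g · b) fun a a' => hadm.g_mul_left_of_u_eq_zero hσ a a' hb) a m

lemma AdmissiblePair.g_central_mul_right (hadm : AdmissiblePair n σH g) {c : Hsub n}
    (hc : ∀ i, (c : G n).u i = 0) (b b' : Gsub n) : g c (b * b') = g c b * g c b' := by
  rw [hadm.g_mul, conjH_of_central _ hc]

lemma AdmissiblePair.g_central_vijG (hadm : AdmissiblePair n σH g) {c : Hsub n}
    (hc : ∀ i, (c : G n).u i = 0) (p : PairIdx n) (hp : (p.1.2 : ℕ) + 1 < n) :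
    g c (vijG p.1.1 p.1.2 hp) = 1 := by
  let χ : Gsub n →* Circle := MonoidHom.mk' (g c) (hadm.g_central_mul_right hc)
  rw [vijG_eq_commutator p.2 p.fst_succ_lt hp]
  exact (map_commutatorElement χ _ _).trans
    (commutatorElement_eq_one_iff_commute.mpr (Commute.all _ _))

lemma AdmissiblePair.g_central_zGOf (hadm : AdmissiblePair n σH g) {c : Hsub n}
    (hc : ∀ i, (c : G n).u i = 0) (f : PairIdx n → ℤ) : g c (zGOf f) = 1 := by
  rw [eq_prod_zpow_single_of_map_add (fun f => g c (zGOf f))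
    (fun f f' => by rw [zGOf_add, hadm.g_central_mul_right hc]) f]
  refine Finset.prod_eq_one fun p _ => ?_
  rw [zGOf_single]
  split_ifs with hp
  · rw [hadm.g_central_vijG hc p hp, one_zpow]
  · rw [hadm.g_one_right, one_zpow]

lemma AdmissiblePair.g_central_wGOf_add (hadm : AdmissiblePair n σH g) {c : Hsub n}
    (hc : ∀ i, (c : G n).u i = 0) (f f' : Fin n → ℤ) :
    g c (wGOf (f + f')) = g c (wGOf f) * g c (wGOf f') := by
  rw [← hadm.g_central_mul_right hc, wGOf_mul, hadm.g_central_mul_right hc,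
    hadm.g_central_zGOf hc, mul_one]

lemma AdmissiblePair.g_zHOf_uiG (hadm : AdmissiblePair n σH g) (hσ : SigmaLamForm hn σH lam)
    (f : Fin n → ℤ) (j : Fin n) (hj : (j : ℕ) + 1 < n) :
    g (zHOf f) (uiG j hj) = ∏ i, gvu g i j ^ f i := by
  rw [eq_prod_zpow_single_of_map_add (fun f => g (zHOf f) (uiG j hj))
    (fun f f' => by rw [zHOf_add, hadm.g_mul_left_of_central hσ _ (fun _ => rfl)]) f]
  refine Finset.prod_congr rfl fun i _ => ?_
  rw [zHOf_single, gvu]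
  split_ifs with hi hij hij
  · rfl
  · exact absurd ⟨hi, hj⟩ hij
  · exact absurd hij.1 hi
  · rw [hadm.g_one_left]

lemma AdmissiblePair.g_central_eq_prod (hadm : AdmissiblePair n σH g)
    (hσ : SigmaLamForm hn σH lam) {c : Hsub n} (hc : ∀ i, (c : G n).u i = 0) (b : Gsub n) :
    g c b =
      ∏ i ∈ Finset.univ.filter (fun i : Fin n => (i : ℕ) + 1 < n),
        ∏ j ∈ Finset.univ.filter (fun j : Fin n => (j : ℕ) + 1 < n),
          gvu g i j ^ (vc (c : G n) i (lastI n hn) * uc (b : G n) j) := by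
  have hb : g c b = g c (wGOf fun i => (b : G n).u i) := by
    conv_lhs => rw [eq_wGOf_mul_zGOf b]
    rw [hadm.g_central_mul_right hc, hadm.g_central_zGOf hc, mul_one]
  rw [hb, eq_prod_zpow_single_of_map_add (fun f => g c (wGOf f)) (hadm.g_central_wGOf_add hc),
    prod_filter_gvu, Finset.prod_comm]
  refine Finset.prod_congr rfl fun j _ => ?_
  rw [wGOf_single]
  split_ifs with hj
  · have hcj : g c (uiG j hj) = ∏ i, gvu g i j ^ vc (c : G n) i (lastI n hn) := by
      conv_lhs => rw [central_eq_zHOf hn hc]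
      exact hadm.g_zHOf_uiG hσ _ j hj
    rw [hcj, ← Finset.prod_zpow]
    exact Finset.prod_congr rfl fun i _ => (zpow_mul _ _ _).symm
  · rw [hadm.g_one_right, one_zpow]
    refine (Finset.prod_eq_one fun i _ => ?_).symm
    rw [gvu, dif_neg (fun h => hj h.2), one_zpow]

lemma AdmissiblePair.g_unH_zGOf (hadm : AdmissiblePair n σH g) (f : PairIdx n → ℤ) :
    g (unH hn) (zGOf f) = ∏ p : PairIdx n, guv g p.1.1 p.1.2 ^ f p := by
  rw [eq_prod_zpow_single_of_map_add (fun f => g (unH hn) (zGOf f))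
    (fun f f' => by rw [zGOf_add, hadm.g_mul, conjH_of_u_eq_zero (fun _ => rfl)]) f]
  refine Finset.prod_congr rfl fun p _ => ?_
  rw [zGOf_single, guv]
  split_ifs with hp
  · rfl
  · rw [hadm.g_one_right]

lemma AdmissiblePair.g_wH_zG (hadm : AdmissiblePair n σH g) (hσ : SigmaLamForm hn σH lam)
    (a : Hsub n) (b : Gsub n) :
    g (wH a) (zG b) =
      ∏ p ∈ Finset.univ.filter (fun p : Fin n × Fin n => p.1 < p.2 ∧ (p.2 : ℕ) + 1 < n),
        guv g p.1 p.2 ^ (uc (a : G n) (lastI n hn) * vc (b : G n) p.1 p.2) := by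
  rw [wH_eq_unH_zpow hn, hadm.g_zpow_left_of_u_eq_zero hσ _ (fun _ => rfl), zG_eq_zGOf,
    hadm.g_unH_zGOf, prod_filter_guv g fun i j => uc (a : G n) (lastI n hn) * vc (b : G n) i j,
    ← Finset.prod_zpow]
  refine Finset.prod_congr rfl fun p _ => ?_
  rw [← zpow_mul, mul_comm, vc, dif_pos p.2]

lemma AdmissiblePair.g_unH_mul_uiG (hadm : AdmissiblePair n σH g) (hσ : SigmaLamForm hn σH lam)
    (hgu : ∀ (i : Fin n) (hi : (i : ℕ) + 1 < n), g (unH hn) (uiG i hi) = 1)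
    (b : Gsub n) (j : Fin n) (hj : (j : ℕ) + 1 < n) :
    g (unH hn) (b * uiG j hj) = g (unH hn) b * g (vinH j hj) b := by
  rw [hadm.g_mul, conjH_uiG_unH, hadm.g_mul_left_of_central hσ _ (fun _ => rfl), hgu, mul_one]

lemma AdmissiblePair.g_vinH_uiG (hadm : AdmissiblePair n σH g) (hσ : SigmaLamForm hn σH lam)
    (hgu : ∀ (i : Fin n) (hi : (i : ℕ) + 1 < n), g (unH hn) (uiG i hi) = 1)
    {i j : Fin n} (hij : i < j) (hi : (i : ℕ) + 1 < n) (hj : (j : ℕ) + 1 < n) :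
    g (vinH j hj) (uiG i hi) = g (unH hn) (vijG i j hj) * g (vinH i hi) (uiG j hj) := by
  have h := hadm.g_unH_mul_uiG hσ hgu (uiG i hi) j hj
  rw [hgu, one_mul, uiG_mul_uiG hij, hadm.g_mul, conjH_of_u_eq_zero (fun _ => rfl),
    hadm.g_unH_mul_uiG hσ hgu, hgu, one_mul] at h
  rw [← h, mul_comm]

lemma AdmissiblePair.guv_eq_inv_gvu_mul_gvu (hadm : AdmissiblePair n σH g) (hσ : SigmaLamForm hn σH lam)
    (hgu : ∀ (i : Fin n) (hi : (i : ℕ) + 1 < n), g (unH hn) (uiG i hi) = 1)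
    {i j : Fin n} (hij : i < j) (hj : (j : ℕ) + 1 < n) :
    guv g i j = (gvu g i j)⁻¹ * gvu g j i := by
  have hi : (i : ℕ) + 1 < n := by have : (i : ℕ) < j := hij; omega
  rw [guv, gvu, gvu, dif_pos hj, dif_pos ⟨hi, hj⟩, dif_pos ⟨hj, hi⟩,
    hadm.g_vinH_uiG hσ hgu hij hi hj]
  exact eq_inv_mul_iff_mul_eq.mpr (mul_comm _ _)

lemma AdmissiblePair.g_mul_right_eq (hadm : AdmissiblePair n σH g) (hσ : SigmaLamForm hn σH lam)
    (a : Hsub n) (b b' : Gsub n) :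
    g a (b * b') =
      (∏ i ∈ Finset.univ.filter (fun i : Fin n => (i : ℕ) + 1 < n),
        ∏ j ∈ Finset.univ.filter (fun j : Fin n => (j : ℕ) + 1 < n),
          gvu g i j ^ (uc (b' : G n) i * uc (b : G n) j * uc (a : G n) (lastI n hn))) *
      (g a b * g a b') := by
  rw [hadm.g_mul, conjH_eq_mul_zHOf hn,
    hadm.g_mul_left_of_central hσ a (c := zHOf _) (fun _ => rfl),
    hadm.g_central_eq_prod hσ (c := zHOf _) (fun _ => rfl)]
  have hexp : ∀ i ∈ Finset.univ.filter (fun i : Fin n => (i : ℕ) + 1 < n), ∀ j : Fin n,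
      vc ((zHOf fun i => uc (b' : G n) i * uc (a : G n) (lastI n hn) : Hsub n) : G n) i
        (lastI n hn) * uc (b : G n) j =
      uc (b' : G n) i * uc (b : G n) j * uc (a : G n) (lastI n hn) := fun i hi j => by
    rw [vc_zHOf_last hn _ (Finset.mem_filter.mp hi).2]
    ring
  rw [Finset.prod_congr rfl fun i hi =>
    Finset.prod_congr rfl fun j _ => congrArg (gvu g i j ^ ·) (hexp i hi j)]
  ac_rfl

end Cocycle

end Development

/-- the values of `g` on the `z`-parts. -/
theorem g_z_parts (n : ℕ) (hn : 2 ≤ n) (lam : Fin n → Circle)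
    (σH : Hsub n → Hsub n → Circle) (g : Hsub n → Gsub n → Circle)
    (hnorm : Normalized (show 0 < n by omega) σH g lam) :
    (∀ (a : Hsub n) (b : Gsub n),
      g (zH a) (wG b) =
        ∏ i ∈ Finset.univ.filter (fun i : Fin n => (i : ℕ) + 1 < n),
          ∏ j ∈ Finset.univ.filter (fun j : Fin n => (j : ℕ) + 1 < n),
            gvu g i j ^ (vc (a : G n) i (lastI n (by omega)) * uc (b : G n) j)) ∧
    (∀ (i j : Fin n) (hij : (i : ℕ) < (j : ℕ)) (hj : (j : ℕ) + 1 < n),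
      g (vinH j hj) (uiG i (by omega)) =
        g (unH (by omega)) (vijG i j hj) * g (vinH i (by omega)) (uiG j hj)) ∧
    (∀ (a : Hsub n) (b : Gsub n),
      g (wH a) (zG b) =
        (∏ p ∈ Finset.univ.filter
            (fun p : Fin n × Fin n => p.1 < p.2 ∧ (p.2 : ℕ) + 1 < n),
          guv g p.1 p.2 ^ (uc (a : G n) (lastI n (by omega)) * vc (b : G n) p.1 p.2)) ∧
      g (wH a) (zG b) =
        ∏ p ∈ Finset.univ.filter
            (fun p : Fin n × Fin n => p.1 < p.2 ∧ (p.2 : ℕ) + 1 < n),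
          ((gvu g p.1 p.2)⁻¹ * gvu g p.2 p.1) ^
            (uc (a : G n) (lastI n (by omega)) * vc (b : G n) p.1 p.2)) ∧
    ∀ (a : Hsub n) (b b' : Gsub n),
      g a (b * b') =
        (∏ i ∈ Finset.univ.filter (fun i : Fin n => (i : ℕ) + 1 < n),
          ∏ j ∈ Finset.univ.filter (fun j : Fin n => (j : ℕ) + 1 < n),
            gvu g i j ^ (uc (b' : G n) i * uc (b : G n) j *
              uc (a : G n) (lastI n (by omega)))) *
        (g a b * g a b') := by
  obtain ⟨hadm, hσ, hgu⟩ := hnorm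
  refine ⟨fun a b => hadm.g_central_eq_prod hσ (fun _ => rfl) (wG b),
    fun i j hij hj => hadm.g_vinH_uiG hσ hgu hij _ hj,
    fun a b => ⟨hadm.g_wH_zG hσ a b, (hadm.g_wH_zG hσ a b).trans ?_⟩,
    hadm.g_mul_right_eq hσ⟩
  refine Finset.prod_congr rfl fun p hp => ?_
  obtain ⟨hlt, hp2⟩ := (Finset.mem_filter.mp hp).2
  rw [hadm.guv_eq_inv_gvu_mul_gvu hσ hgu hlt hp2]

end FreeNilp
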